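/- arXiv:1904.02584 — 6 statements merged into one kernel-verified Lean document; each statement's English description precedes it below -/
import Mathlib

section
/- Let F: ℂ → ℝ be a non-constant subharmonic function. Then F is unbounded above. -/
open Set

section Auxiliary

open Complex Metric

/-- If a continuous `2π`-periodic function is `≤ c` everywhere but its integral over a
period is `≥ 2π c`, then it equals `c` everywhere. -/
lemma circle_eq_const (g : ℝ → ℝ) (hg : Continuous g)
    (hper : Function.Periodic g (2 * Real.pi)) (c : ℝ)
    (hle : ∀ θ, g θ ≤ c)
    (hint : 2 * Real.pi * c ≤ ∫ θ in (0:ℝ)..(2 * Real.pi), g θ) (θ₀ : ℝ) :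
    g θ₀ = c := by
  by_contra h
  have hπ : 0 < Real.pi := Real.pi_pos
  have hlt : g θ₀ < c := (hle θ₀).lt_of_ne h
  set c' := (g θ₀ + c) / 2 with hc'def
  have hc' : c' < c := by simp only [hc'def]; linarith
  have hθc' : g θ₀ < c' := by simp only [hc'def]; linarith
  have hUopen : IsOpen (g ⁻¹' Iio c') := (isOpen_Iio).preimage hg
  have hmem : θ₀ ∈ g ⁻¹' Iio c' := hθc'
  obtain ⟨ε, hε, hball⟩ := Metric.isOpen_iff.1 hUopen θ₀ hmem
  set η := min (ε / 2) Real.pi with hηdef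
  have hη0 : 0 < η := lt_min (by linarith) hπ
  have hηπ : η ≤ Real.pi := min_le_right _ _
  have hsub : ∀ θ ∈ Icc (θ₀ - η) (θ₀ + η), g θ < c' := by
    intro θ hθ
    have : θ ∈ Metric.ball θ₀ ε := by
      rw [Metric.mem_ball, Real.dist_eq]
      rcases hθ with ⟨h1, h2⟩
      have : η ≤ ε / 2 := min_le_left _ _
      rw [abs_lt]; constructor <;> linarith
    exact hball this
  -- shift integral to be centered at θ₀
  have hshift : (∫ θ in (0:ℝ)..(2 * Real.pi), g θ)
      = ∫ θ in (θ₀ - Real.pi)..(θ₀ + Real.pi), g θ := by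
    have := hper.intervalIntegral_add_eq (θ₀ - Real.pi) 0
    rw [zero_add] at this
    rw [← this]
    ring_nf
  have hii : ∀ a b : ℝ, IntervalIntegrable g MeasureTheory.volume a b :=
    fun a b => hg.intervalIntegrable a b
  have h1 : (∫ θ in (θ₀ - Real.pi)..(θ₀ - η), g θ) ≤ (Real.pi - η) * c := by
    have : (∫ θ in (θ₀ - Real.pi)..(θ₀ - η), g θ)
        ≤ ∫ _θ in (θ₀ - Real.pi)..(θ₀ - η), c := by
      apply intervalIntegral.integral_mono_on (by linarith) (hii _ _)
        (intervalIntegrable_const)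
      intro x _; exact hle x
    simpa [smul_eq_mul, sub_sub_cancel] using this.trans_eq (by
      rw [intervalIntegral.integral_const, smul_eq_mul]; ring)
  have h2 : (∫ θ in (θ₀ + η)..(θ₀ + Real.pi), g θ) ≤ (Real.pi - η) * c := by
    have : (∫ θ in (θ₀ + η)..(θ₀ + Real.pi), g θ)
        ≤ ∫ _θ in (θ₀ + η)..(θ₀ + Real.pi), c := by
      apply intervalIntegral.integral_mono_on (by linarith) (hii _ _)
        (intervalIntegrable_const)
      intro x _; exact hle x
    simpa [smul_eq_mul] using this.trans_eq (by
      rw [intervalIntegral.integral_const, smul_eq_mul]; ring)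
  have h3 : (∫ θ in (θ₀ - η)..(θ₀ + η), g θ) ≤ (2 * η) * c' := by
    have : (∫ θ in (θ₀ - η)..(θ₀ + η), g θ)
        ≤ ∫ _θ in (θ₀ - η)..(θ₀ + η), c' := by
      apply intervalIntegral.integral_mono_on (by linarith) (hii _ _)
        (intervalIntegrable_const)
      intro x hx; exact (hsub x hx).le
    simpa [smul_eq_mul] using this.trans_eq (by
      rw [intervalIntegral.integral_const, smul_eq_mul]; ring)
  have hsplit : (∫ θ in (θ₀ - Real.pi)..(θ₀ + Real.pi), g θ)
      = (∫ θ in (θ₀ - Real.pi)..(θ₀ - η), g θ)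
        + (∫ θ in (θ₀ - η)..(θ₀ + η), g θ)
        + (∫ θ in (θ₀ + η)..(θ₀ + Real.pi), g θ) := by
    rw [intervalIntegral.integral_add_adjacent_intervals (hii _ _) (hii _ _),
      intervalIntegral.integral_add_adjacent_intervals (hii _ _) (hii _ _)]
  have : 2 * Real.pi * c ≤ 2 * Real.pi * c - 2 * η * (c - c') := by
    calc 2 * Real.pi * c ≤ ∫ θ in (0:ℝ)..(2 * Real.pi), g θ := hint
    _ = _ := by rw [hshift, hsplit]
    _ ≤ (Real.pi - η) * c + 2 * η * c' + (Real.pi - η) * c := by linarith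
    _ = 2 * Real.pi * c - 2 * η * (c - c') := by ring
  nlinarith [mul_pos hη0 (sub_pos.2 hc')]

/-- Mean value property of `log ‖·‖` over circles not enclosing the singularity. -/
lemma log_abs_circle_mean (a : ℂ) (r : ℝ) (hr : 0 < r) (hra : r < ‖a‖) :
    (∫ θ in (0:ℝ)..(2 * Real.pi),
        Real.log (‖a + r * Complex.exp (θ * Complex.I)‖))
      = 2 * Real.pi * Real.log (‖a‖) := by
  have ha0 : a ≠ 0 := by
    intro h; rw [h] at hra; simp at hra; linarith
  set u : ℂ := (‖a‖ : ℂ) / a with hu_def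
  have hua : u * a = (‖a‖ : ℂ) := by
    rw [hu_def, div_mul_cancel₀ _ ha0]
  have habsu : ‖u‖ = 1 := by
    rw [hu_def, norm_div, Complex.norm_real, Real.norm_eq_abs,
      _root_.abs_of_pos (norm_pos_iff.mpr ha0), div_self (norm_pos_iff.mpr ha0).ne']
  set f : ℂ → ℂ := fun ζ => Complex.log ((‖a‖ : ℂ) + u * ζ) with hf_def
  have hre : ∀ ζ : ℂ, ‖ζ‖ ≤ r → 0 < ((‖a‖ : ℂ) + u * ζ).re := by
    intro ζ hζ
    have h1 : ‖u * ζ‖ ≤ r := by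
      rw [norm_mul, habsu, one_mul]; exact hζ
    have h2 : -(‖u * ζ‖) ≤ (u * ζ).re :=
      (abs_le.1 (Complex.abs_re_le_norm (u * ζ))).1
    have h3 : ((‖a‖ : ℂ) + u * ζ).re = ‖a‖ + (u * ζ).re := by simp
    rw [h3]; linarith
  have hslit : ∀ ζ : ℂ, ‖ζ‖ ≤ r →
      ((‖a‖ : ℂ) + u * ζ) ∈ Complex.slitPlane :=
    fun ζ hζ => Complex.mem_slitPlane_iff.2 (Or.inl (hre ζ hζ))
  have hdiff : DifferentiableOn ℂ f (closedBall (0:ℂ) r) := by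
    intro ζ hζ
    have hin : DifferentiableAt ℂ (fun ζ : ℂ => (‖a‖ : ℂ) + u * ζ) ζ := by fun_prop
    exact (hin.clog
      (hslit ζ (by simpa [Complex.dist_eq] using mem_closedBall_zero_iff.1 hζ))
      ).differentiableWithinAt
  have hcauchy := hdiff.circleIntegral_sub_inv_smul (w := 0) (by simpa using hr)
  rw [circleIntegral] at hcauchy
  simp only [sub_zero, deriv_circleMap, circleMap_zero, smul_eq_mul] at hcauchy
  have hrw : ∀ θ : ℝ, (r : ℂ) * Complex.exp (θ * I) * I *
      (((r : ℂ) * Complex.exp (θ * I))⁻¹ * f ((r : ℂ) * Complex.exp (θ * I)))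
      = I * f ((r : ℂ) * Complex.exp (θ * I)) := by
    intro θ
    have hne : (r : ℂ) * Complex.exp (θ * I) ≠ 0 :=
      mul_ne_zero (by exact_mod_cast hr.ne') (Complex.exp_ne_zero _)
    have hr' : (r : ℂ) ≠ 0 := by exact_mod_cast hr.ne'
    field_simp
  rw [intervalIntegral.integral_congr (fun θ _ => hrw θ)] at hcauchy
  rw [intervalIntegral.integral_const_mul] at hcauchy
  have hint : (∫ θ in (0:ℝ)..(2 * Real.pi), f ((r : ℂ) * Complex.exp (θ * I)))
      = 2 * Real.pi * f 0 := by
    apply mul_left_cancel₀ I_ne_zero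
    rw [hcauchy]; ring
  have habsmem : ∀ θ : ℝ, ‖(r:ℂ) * Complex.exp (θ * I)‖ ≤ r := by
    intro θ
    rw [norm_mul, Complex.norm_exp]
    simp [_root_.abs_of_pos hr]
  have hcont : Continuous fun θ : ℝ => f ((r : ℂ) * Complex.exp (θ * I)) := by
    apply continuous_iff_continuousAt.2
    intro θ
    have hin : ContinuousAt (fun θ : ℝ => (‖a‖ : ℂ) + u * ((r:ℂ) * Complex.exp (θ * I))) θ := by fun_prop
    exact hin.clog (hslit _ (habsmem θ))
  have hii : IntervalIntegrable (fun θ : ℝ => f ((r : ℂ) * Complex.exp (θ * I)))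
      MeasureTheory.volume 0 (2 * Real.pi) := hcont.intervalIntegrable _ _
  have hre_int := Complex.reCLM.intervalIntegral_comp_comm hii
  rw [hint] at hre_int
  -- identify the real parts
  have hkey : ∀ θ : ℝ, Complex.reCLM (f ((r : ℂ) * Complex.exp (θ * I)))
      = Real.log (‖a + r * Complex.exp (θ * Complex.I)‖) := by
    intro θ
    have h1 : (‖a‖ : ℂ) + u * ((r:ℂ) * Complex.exp (θ * I))
        = u * (a + (r:ℂ) * Complex.exp (θ * I)) := by
      rw [mul_add, hua]
    simp only [Complex.reCLM_apply, hf_def, Complex.log_re, h1, norm_mul, habsu, one_mul]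
  rw [intervalIntegral.integral_congr (fun θ _ => hkey θ)] at hre_int
  rw [hre_int]
  have : f 0 = Complex.log ((‖a‖ : ℂ)) := by simp [hf_def]
  rw [this]
  have h2 : (2 * (Real.pi:ℂ)) * Complex.log ((‖a‖ : ℂ))
      = ((2 * Real.pi : ℝ) : ℂ) * Complex.log ((‖a‖ : ℂ)) := by push_cast; ring
  simp only [Complex.reCLM_apply]
  rw [h2, Complex.re_ofReal_mul, Complex.log_re, Complex.norm_real, Real.norm_eq_abs,
    _root_.abs_of_pos (norm_pos_iff.mpr ha0)]

/-- Maximum principle on a closed annulus for functions satisfying the sub-mean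
value inequality on circles contained in the open annulus. -/
lemma annulus_max_principle (H : ℂ → ℝ) (w : ℂ) (ρ R b : ℝ)
    (hρ : 0 < ρ) (hρR : ρ < R)
    (hc : ContinuousOn H {w}ᶜ)
    (hsm : ∀ x : ℂ, ρ < dist x w → dist x w < R → ∀ r : ℝ, 0 < r →
        r < dist x w - ρ → r < R - dist x w →
        H x ≤ (1 / (2 * Real.pi)) *
          ∫ θ in (0:ℝ)..(2 * Real.pi), H (x + r * Complex.exp (θ * Complex.I)))
    (hinner : ∀ ζ : ℂ, dist ζ w = ρ → H ζ ≤ b)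
    (houter : ∀ ζ : ℂ, dist ζ w = R → H ζ ≤ b) :
    ∀ ζ : ℂ, ρ ≤ dist ζ w → dist ζ w ≤ R → H ζ ≤ b := by
  have hπ : 0 < Real.pi := Real.pi_pos
  set K : Set ℂ := {ζ : ℂ | ρ ≤ dist ζ w ∧ dist ζ w ≤ R} with hK_def
  have hKsub : K ⊆ {w}ᶜ := by
    intro ζ hζ
    simp only [mem_compl_iff, mem_singleton_iff]
    intro h
    rw [h] at hζ
    have h1 : ρ ≤ dist w w := hζ.1
    rw [dist_self] at h1
    linarith
  have hKclosed : IsClosed K := by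
    have : K = (fun ζ : ℂ => dist ζ w) ⁻¹' Icc ρ R := by
      ext ζ; simp [hK_def, mem_Icc]
    rw [this]
    exact isClosed_Icc.preimage (continuous_id.dist continuous_const)
  have hKcompact : IsCompact K := by
    apply (isCompact_closedBall w R).of_isClosed_subset hKclosed
    intro ζ hζ
    exact mem_closedBall.2 hζ.2
  have hKne : K.Nonempty := by
    refine ⟨w + (ρ : ℂ), ?_, ?_⟩ <;>
      simp [Complex.dist_eq, _root_.abs_of_pos hρ, hρR.le]
  have HK : ContinuousOn H K := hc.mono hKsub
  obtain ⟨x₀, hx₀K, hx₀max⟩ := hKcompact.exists_isMaxOn hKne HK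
  set c := H x₀ with hc_def
  suffices hcb : c ≤ b by
    intro ζ h1 h2
    exact (hx₀max ⟨h1, h2⟩).trans hcb
  set A : Set ℂ := K ∩ H ⁻¹' {c} with hA_def
  have hAclosed : IsClosed A := HK.preimage_isClosed_of_isClosed hKclosed isClosed_singleton
  have hAcompact : IsCompact A := hKcompact.of_isClosed_subset hAclosed inter_subset_left
  have hAne : A.Nonempty := ⟨x₀, hx₀K, rfl⟩
  obtain ⟨x, hxA, hxmax⟩ := hAcompact.exists_isMaxOn hAne
    ((Continuous.continuousOn (by fun_prop : Continuous fun ζ : ℂ => dist ζ w)))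
  obtain ⟨⟨hρx, hxR⟩, hHx⟩ := hxA
  have hHxc : H x = c := hHx
  rcases eq_or_lt_of_le hρx with h1 | hρx'
  · rw [← hHxc]; exact hinner x h1.symm
  rcases eq_or_lt_of_le hxR with h2 | hxR'
  · rw [← hHxc]; exact houter x h2
  exfalso
  set r := min (dist x w - ρ) (R - dist x w) / 2 with hr_def
  have hr0 : 0 < r := by
    apply div_pos _ two_pos
    exact lt_min (by linarith) (by linarith)
  have hr1 : r < dist x w - ρ := by
    have := min_le_left (dist x w - ρ) (R - dist x w)
    rw [hr_def]; linarith
  have hr2 : r < R - dist x w := by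
    have := min_le_right (dist x w - ρ) (R - dist x w)
    rw [hr_def]; linarith
  have hmean := hsm x hρx' hxR' r hr0 hr1 hr2
  set g : ℝ → ℝ := fun θ => H (x + r * Complex.exp (θ * Complex.I)) with hg_def
  have hcircK : ∀ θ : ℝ, (x + r * Complex.exp (θ * Complex.I)) ∈ K := by
    intro θ
    have habs : ‖(r : ℂ) * Complex.exp (θ * Complex.I)‖ = r := by
      rw [norm_mul, Complex.norm_exp]
      simp [_root_.abs_of_pos hr0]
    have hd1 : dist (x + r * Complex.exp (θ * Complex.I)) w
        ≤ dist x w + r := by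
      calc dist (x + r * Complex.exp (θ * Complex.I)) w
          ≤ dist (x + r * Complex.exp (θ * Complex.I)) x + dist x w := dist_triangle _ _ _
      _ = r + dist x w := by
          rw [Complex.dist_eq, add_sub_cancel_left, habs]
      _ = dist x w + r := by ring
    have hd2 : dist x w - r ≤ dist (x + r * Complex.exp (θ * Complex.I)) w := by
      have : dist x w ≤ dist x (x + r * Complex.exp (θ * Complex.I))
          + dist (x + r * Complex.exp (θ * Complex.I)) w := dist_triangle _ _ _
      have he : dist x (x + r * Complex.exp (θ * Complex.I)) = r := by
        rw [Complex.dist_eq]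
        have : x - (x + r * Complex.exp (θ * Complex.I))
            = -((r : ℂ) * Complex.exp (θ * Complex.I)) := by ring
        rw [this, norm_neg, habs]
      linarith
    constructor
    · linarith
    · linarith
  have hgle : ∀ θ, g θ ≤ c := fun θ => hx₀max (hcircK θ)
  have hgcont : Continuous g := by
    apply continuous_iff_continuousAt.2
    intro θ
    have hne : (x + r * Complex.exp (θ * Complex.I)) ∈ ({w}ᶜ : Set ℂ) :=
      hKsub (hcircK θ)
    have h2 : ContinuousAt (fun θ : ℝ => x + (r:ℂ) * Complex.exp (θ * Complex.I)) θ := by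
      fun_prop
    exact ContinuousAt.comp (g := H)
      (f := fun θ : ℝ => x + (r:ℂ) * Complex.exp (θ * Complex.I))
      (hc.continuousAt (isOpen_compl_singleton.mem_nhds hne)) h2
  have hper : Function.Periodic g (2 * Real.pi) := by
    intro θ
    simp only [hg_def]
    congr 2
    push_cast
    rw [add_mul, Complex.exp_add, Complex.exp_two_pi_mul_I, mul_one]
  have hint : 2 * Real.pi * c ≤ ∫ θ in (0:ℝ)..(2 * Real.pi), g θ := by
    rw [hHxc] at hmean
    have h2π : (0:ℝ) < 2 * Real.pi := by linarith
    have := mul_le_mul_of_nonneg_left hmean h2π.le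
    rw [← mul_assoc, mul_one_div, div_self h2π.ne'] at this
    linarith
  have heq := circle_eq_const g hgcont hper c hgle hint (Complex.arg (x - w))
  -- the point on the circle farthest from w is also a maximum point, contradiction
  have hvpos : (0:ℝ) < ‖x - w‖ := by
    rw [← Complex.dist_eq]; linarith
  have hvne : ((‖x - w‖ : ℝ) : ℂ) ≠ 0 := by exact_mod_cast hvpos.ne'
  have hexp : Complex.exp ((x - w).arg * Complex.I)
      = (x - w) / (‖x - w‖ : ℂ) := by
    rw [eq_div_iff hvne, mul_comm]
    exact_mod_cast Complex.norm_mul_exp_arg_mul_I (x - w)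
  have hx'w : (x + r * Complex.exp ((x - w).arg * Complex.I)) - w
      = (((‖x - w‖ + r) / ‖x - w‖ : ℝ) : ℂ) * (x - w) := by
    rw [hexp]
    push_cast
    field_simp
    ring
  have hdist' : dist (x + r * Complex.exp ((x - w).arg * Complex.I)) w
      = dist x w + r := by
    rw [Complex.dist_eq, hx'w, norm_mul, Complex.norm_real, Real.norm_eq_abs,
      _root_.abs_of_pos (div_pos (by linarith) hvpos), Complex.dist_eq]
    field_simp
  have hx'A : (x + r * Complex.exp ((x - w).arg * Complex.I)) ∈ A := by
    refine ⟨⟨?_, ?_⟩, ?_⟩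
    · rw [hdist']; linarith
    · rw [hdist']; linarith
    · exact heq
  have h9 : dist (x + r * Complex.exp ((x - w).arg * Complex.I)) w
      ≤ dist x w := hxmax hx'A
  rw [hdist'] at h9
  linarith

/-- Liouville's theorem for subharmonic functions on `ℂ` (subharmonicity expressed
via the sub-mean value inequality over circles): a non-constant subharmonic
function on all of `ℂ` is unbounded above. -/
theorem subharmonic_nonconstant_unbounded_above (F : ℂ → ℝ)
    (hFc : Continuous F)
    (hsub : ∀ (z : ℂ) (r : ℝ), 0 < r →
      F z ≤ (1 / (2 * Real.pi)) *
        ∫ θ in (0:ℝ)..(2 * Real.pi), F (z + r * Complex.exp (θ * Complex.I)))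
    (hnc : ∃ z w : ℂ, F z ≠ F w) :
    ¬ BddAbove (Set.range F) := by
  intro hB
  obtain ⟨M, hM⟩ := hB
  have hMF : ∀ ζ : ℂ, F ζ ≤ M := fun ζ => hM (mem_range_self ζ)
  have hπ : 0 < Real.pi := Real.pi_pos
  have key : ∀ z w : ℂ, F z ≤ F w := by
    intro z w
    rcases eq_or_ne z w with rfl | hzw
    · exact le_rfl
    have hd : 0 < dist z w := dist_pos.2 hzw
    set d := dist z w with hd_def
    have hδstep : ∀ δ : ℝ, 0 < δ → F z ≤ F w + δ := by
      intro δ hδ0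
      -- choose a small radius ρ around w where F ≤ F w + δ
      obtain ⟨ρ0, hρ00, hρball⟩ : ∃ ρ0 > 0, ∀ ζ : ℂ, dist ζ w ≤ ρ0 → F ζ ≤ F w + δ := by
        obtain ⟨ε, hε0, hεball⟩ := Metric.continuousAt_iff.1 (hFc.continuousAt (x := w)) δ hδ0
        refine ⟨ε / 2, by linarith, fun ζ hζ => ?_⟩
        have := hεball (show dist ζ w < ε by linarith)
        rw [Real.dist_eq, abs_lt] at this
        linarith [this.2]
      set ρ := min ρ0 (d / 2) with hρ_def
      have hρ0 : 0 < ρ := lt_min hρ00 (by linarith)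
      have hρd : ρ < d := (min_le_right _ _).trans_lt (by linarith)
      have hεstep : ∀ ε : ℝ, 0 < ε →
          F z ≤ F w + δ + ε * (Real.log d - Real.log ρ) := by
        intro ε hε0
        set H : ℂ → ℝ := fun ζ => F ζ - ε * Real.log (dist ζ w) with hH_def
        set R := max (d + 1) (ρ * Real.exp ((M - F w - δ) / ε)) with hR_def
        have hR1 : d + 1 ≤ R := le_max_left _ _
        have hρR : ρ < R := by linarith
        have hRpos : 0 < R := by linarith
        have hlogR : M - F w - δ ≤ ε * (Real.log R - Real.log ρ) := by
          have h1 : ρ * Real.exp ((M - F w - δ) / ε) ≤ R := le_max_right _ _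
          have h2 : Real.log (ρ * Real.exp ((M - F w - δ) / ε)) ≤ Real.log R :=
            Real.log_le_log (by positivity) h1
          rw [Real.log_mul hρ0.ne' (Real.exp_ne_zero _), Real.log_exp] at h2
          have h3 : (M - F w - δ) / ε ≤ Real.log R - Real.log ρ := by linarith
          calc M - F w - δ = ε * ((M - F w - δ) / ε) := by field_simp
          _ ≤ ε * (Real.log R - Real.log ρ) := by
              exact mul_le_mul_of_nonneg_left h3 hε0.le
        set b := F w + δ - ε * Real.log ρ with hb_def
        -- continuity of H away from w
        have hHc : ContinuousOn H {w}ᶜ := by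
          intro ζ hζ
          have hζw : ζ ≠ w := hζ
          have hdistpos : 0 < dist ζ w := dist_pos.2 hζw
          have hlog : ContinuousAt (fun ξ : ℂ => Real.log (dist ξ w)) ζ :=
            ContinuousAt.comp (g := Real.log) (f := fun ξ : ℂ => dist ξ w)
              (Real.continuousAt_log hdistpos.ne') (by fun_prop)
          exact (hFc.continuousAt.sub (continuousAt_const.mul hlog)).continuousWithinAt
        -- sub-mean value property of H
        have hHsm : ∀ x : ℂ, ρ < dist x w → dist x w < R → ∀ r : ℝ, 0 < r →
            r < dist x w - ρ → r < R - dist x w →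
            H x ≤ (1 / (2 * Real.pi)) *
              ∫ θ in (0:ℝ)..(2 * Real.pi), H (x + r * Complex.exp (θ * Complex.I)) := by
          intro x hx1 hx2 r hr0 hr1 hr2
          have hrx : r < dist x w := by linarith
          have habs : r < ‖x - w‖ := by rwa [← Complex.dist_eq]
          have hdistid : ∀ θ : ℝ, dist (x + r * Complex.exp (θ * Complex.I)) w
              = ‖(x - w) + r * Complex.exp (θ * Complex.I)‖ := by
            intro θ
            rw [Complex.dist_eq, add_sub_right_comm]
          have hdpos : ∀ θ : ℝ, 0 < dist (x + r * Complex.exp (θ * Complex.I)) w := by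
            intro θ
            have h1 : dist x w ≤ dist x (x + r * Complex.exp (θ * Complex.I))
                + dist (x + r * Complex.exp (θ * Complex.I)) w := dist_triangle _ _ _
            have h2 : dist x (x + r * Complex.exp (θ * Complex.I)) = r := by
              rw [Complex.dist_eq]
              have : x - (x + r * Complex.exp (θ * Complex.I))
                  = -((r : ℂ) * Complex.exp (θ * Complex.I)) := by ring
              rw [this, norm_neg, norm_mul, Complex.norm_exp]
              simp [_root_.abs_of_pos hr0]
            linarith
          have hcont1 : Continuous fun θ : ℝ => F (x + r * Complex.exp (θ * Complex.I)) := by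
            fun_prop
          have hcont2 : Continuous fun θ : ℝ =>
              Real.log (dist (x + r * Complex.exp (θ * Complex.I)) w) := by
            apply continuous_iff_continuousAt.2
            intro θ
            exact ContinuousAt.comp (g := Real.log)
              (Real.continuousAt_log (hdpos θ).ne') (by fun_prop)
          have hsplit : (∫ θ in (0:ℝ)..(2 * Real.pi),
                H (x + r * Complex.exp (θ * Complex.I)))
              = (∫ θ in (0:ℝ)..(2 * Real.pi), F (x + r * Complex.exp (θ * Complex.I)))
                - ε * ∫ θ in (0:ℝ)..(2 * Real.pi),
                    Real.log (dist (x + r * Complex.exp (θ * Complex.I)) w) := by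
            rw [← intervalIntegral.integral_const_mul,
              ← intervalIntegral.integral_sub (hcont1.intervalIntegrable _ _)
                ((hcont2.intervalIntegrable _ _).const_mul ε)]
          have hlogint : (∫ θ in (0:ℝ)..(2 * Real.pi),
                Real.log (dist (x + r * Complex.exp (θ * Complex.I)) w))
              = 2 * Real.pi * Real.log (dist x w) := by
            simp only [hdistid]
            rw [log_abs_circle_mean (x - w) r hr0 habs, ← Complex.dist_eq]
          have hFmean := hsub x r hr0
          have h2π : (0:ℝ) < 2 * Real.pi := by linarith
          rw [hsplit, hlogint]
          have : (1 / (2 * Real.pi)) *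
              ((∫ θ in (0:ℝ)..(2 * Real.pi), F (x + r * Complex.exp (θ * Complex.I)))
                - ε * (2 * Real.pi * Real.log (dist x w)))
              = (1 / (2 * Real.pi)) *
                (∫ θ in (0:ℝ)..(2 * Real.pi), F (x + r * Complex.exp (θ * Complex.I)))
                - ε * Real.log (dist x w) := by
            rw [mul_sub]; congr 1
            rw [one_div, inv_mul_eq_div, div_eq_iff h2π.ne']; ring
          rw [this]
          simp only [hH_def]
          linarith
        -- boundary bounds
        have hinner : ∀ ζ : ℂ, dist ζ w = ρ → H ζ ≤ b := by
          intro ζ hζ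
          have h1 : F ζ ≤ F w + δ := hρball ζ (by rw [hζ]; exact min_le_left _ _)
          simp only [hH_def, hb_def, hζ]
          linarith
        have houter : ∀ ζ : ℂ, dist ζ w = R → H ζ ≤ b := by
          intro ζ hζ
          simp only [hH_def, hb_def, hζ]
          have := hMF ζ
          linarith
        have hz := annulus_max_principle H w ρ R b hρ0 hρR hHc hHsm hinner houter z
          (by rw [← hd_def]; linarith) (by rw [← hd_def]; linarith)
        simp only [hH_def, hb_def, ← hd_def] at hz
        linarith
      -- let ε → 0
      set C := Real.log d - Real.log ρ with hC_def
      have hC0 : 0 ≤ C := by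
        have := Real.log_le_log hρ0 hρd.le
        simp only [hC_def]; linarith
      by_contra hcon
      push_neg at hcon
      have ht : 0 < F z - (F w + δ) := by linarith
      have hs : (0:ℝ) < C + 1 := by linarith
      set ε₀ := (F z - (F w + δ)) / (2 * (C + 1)) with hε₀_def
      have hε₀ : 0 < ε₀ := by positivity
      have hε := hεstep ε₀ hε₀
      have hkey2 : ε₀ * (2 * (C + 1)) = F z - (F w + δ) := by
        rw [hε₀_def]; field_simp
      nlinarith [mul_nonneg hε₀.le hC0]
    -- let δ → 0
    by_contra hcon
    push_neg at hcon
    have := hδstep ((F z - F w) / 2) (by linarith)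
    linarith
  obtain ⟨z, w, hne⟩ := hnc
  exact hne (le_antisymm (key z w) (key w z))

end Auxiliary
end

section
/- Define ψ(x) = exp(-1/x) for 0 < x ≤ 1/2, ψ(0) = 0, and f(x) = exp(-1/ψ(x)) for 0 < x ≤ 1/2, f(0) = 0. Then Λ_f(x) = ψ(x) for all x ∈ [0, 1/2], and Λ_f satisfies a doubling condition: for any σ > 1 with (σ-1)/log 2 ≥ 1/2, one has 2ψ(x) ≤ ψ(σx) whenever 0 < σx ≤ 1/2. -/
open Set

/-- `Λ_f(x) = -1/log(f x)` (with the convention `Λ_f(0) = 0`, which holds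
automatically since `f 0 = 0` and `Real.log 0 = 0` in Mathlib). -/
noncomputable def Lam (f : ℝ → ℝ) (x : ℝ) : ℝ := -1 / Real.log (f x)

theorem lam_eq_of_eq_exp_neg_inv {f : ℝ → ℝ} {x y : ℝ} (h : f x = Real.exp (-(1 / y))) :
    Lam f x = y := by
  rw [Lam, h, Real.log_exp, neg_div_neg_eq, one_div_one_div]

theorem lam_eq_zero_of_eq_zero {f : ℝ → ℝ} {x : ℝ} (h : f x = 0) : Lam f x = 0 := by
  simp [Lam, h]

theorem log_two_sub_inv_le_neg_inv {σ x : ℝ} (hσ : 0 < σ) (hx : 0 < x)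
    (h : σ * x ≤ (σ - 1) / Real.log 2) : Real.log 2 - 1 / x ≤ -(1 / (σ * x)) := by
  have hσx : 0 < σ * x := mul_pos hσ hx
  have h' : σ * x * Real.log 2 ≤ σ - 1 := (le_div_iff₀ (Real.log_pos one_lt_two)).mp h
  calc Real.log 2 - 1 / x = (σ * x * Real.log 2 - σ) / (σ * x) := by field_simp
    _ ≤ -1 / (σ * x) := by gcongr; linarith
    _ = -(1 / (σ * x)) := neg_div _ _

theorem two_mul_exp_neg_inv_le {σ x : ℝ} (hσ : 0 < σ) (hx : 0 < x)
    (h : σ * x ≤ (σ - 1) / Real.log 2) :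
    2 * Real.exp (-(1 / x)) ≤ Real.exp (-(1 / (σ * x))) :=
  calc 2 * Real.exp (-(1 / x)) = Real.exp (Real.log 2 - 1 / x) := by
        rw [sub_eq_add_neg, Real.exp_add, Real.exp_log two_pos]
    _ ≤ Real.exp (-(1 / (σ * x))) := Real.exp_le_exp.mpr (log_two_sub_inv_le_neg_inv hσ hx h)

/-- For `ψ(x) = e^{-1/x}` and `f(x) = exp(-1/ψ(x)) = exp(-e^{1/x})` (both `0` at `0`),
one has `Λ_f = ψ` on `[0,1/2]`, and `Λ_f` satisfies a doubling condition: whenever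
`σ > 1` with `(σ-1)/log 2 ≥ 1/2`, `2ψ(x) ≤ ψ(σx)` for all `x` with `0 < σx ≤ 1/2`. -/
theorem very_flat_doubling (ψ f : ℝ → ℝ)
    (hψ : ∀ x : ℝ, ψ x = if x = 0 then 0 else Real.exp (-(1 / x)))
    (hf : ∀ x : ℝ, f x = if x = 0 then 0 else Real.exp (-(1 / ψ x))) :
    (∀ x ∈ Icc (0:ℝ) (1 / 2), Lam f x = ψ x) ∧
    ∀ σ : ℝ, 1 < σ → (1:ℝ) / 2 ≤ (σ - 1) / Real.log 2 →
      ∀ x : ℝ, 0 < σ * x → σ * x ≤ 1 / 2 → 2 * ψ x ≤ ψ (σ * x) := by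
  constructor
  · intro x _
    rcases eq_or_ne x 0 with rfl | hx
    · rw [lam_eq_zero_of_eq_zero (by simp [hf]), hψ, if_pos rfl]
    · exact lam_eq_of_eq_exp_neg_inv (by rw [hf, if_neg hx])
  · intro σ hσ hσ_log x hσx hσx_le
    have hx : 0 < x := pos_of_mul_pos_right hσx (by linarith)
    rw [hψ, hψ, if_neg hx.ne', if_neg hσx.ne']
    exact two_mul_exp_neg_inv_le (by linarith) hx (hσx_le.trans hσ_log)
end

section
/- Let f: [0,∞) → ℝ be strictly increasing with f(0) = 0, and suppose f vanishes to infinite order at 0 (i.e. f(x)/x^n → 0 as x → 0⁺ for all n ∈ ℕ). Then for any p, q > 0, (f⁻¹(t))^p / t^q → ∞ as t → 0⁺. -/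
open Set Filter

/-- If `f` is strictly increasing with `f 0 = 0` and vanishes to infinite order
at `0`, then `(f⁻¹(t))^p / t^q → ∞` as `t → 0⁺` for all `p, q > 0`. -/
theorem finv_rpow_div_tendsto_atTop (f finv : ℝ → ℝ)
    (hf : StrictMonoOn f (Ici 0)) (hf0 : f 0 = 0) (hfc : Continuous f)
    (hvan : ∀ n : ℕ, Tendsto (fun x => f x / x ^ n) (nhdsWithin 0 (Ioi 0)) (nhds 0))
    (hfinv : ∀ x ≥ (0:ℝ), finv (f x) = x)
    (hfinv' : ∀ t ≥ (0:ℝ), 0 ≤ finv t ∧ f (finv t) = t) :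
    ∀ p q : ℝ, 0 < p → 0 < q →
      Tendsto (fun t => finv t ^ p / t ^ q) (nhdsWithin 0 (Ioi 0)) atTop := by
  intro p q hp hq
  have hfpos : ∀ x : ℝ, 0 < x → 0 < f x := by
    intro x hx
    have := hf (self_mem_Ici) (le_of_lt hx : x ∈ Ici 0) hx
    rwa [hf0] at this
  -- choose n with p < n * q
  obtain ⟨n, hn⟩ : ∃ n : ℕ, p < (n : ℝ) * q := by
    refine ⟨⌈p / q⌉₊ + 1, ?_⟩
    have h1 : p / q < ((⌈p / q⌉₊ + 1 : ℕ) : ℝ) := by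
      push_cast
      exact lt_of_le_of_lt (Nat.le_ceil _) (by linarith)
    calc p = p / q * q := by field_simp
    _ < ((⌈p / q⌉₊ + 1 : ℕ) : ℝ) * q := by exact mul_lt_mul_of_pos_right h1 hq
  -- key lemma: x^p / f x ^ q → ∞ as x → 0⁺
  have key : Tendsto (fun x => x ^ p / f x ^ q) (nhdsWithin 0 (Ioi 0)) atTop := by
    have h1 : Tendsto (fun x : ℝ => x ^ (p - (n : ℝ) * q)) (nhdsWithin 0 (Ioi 0)) atTop := by
      have := (tendsto_rpow_atTop (y := (n : ℝ) * q - p) (by linarith)).comp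
        tendsto_inv_nhdsGT_zero
      refine this.congr' ?_
      filter_upwards [self_mem_nhdsWithin] with x hx
      have hx0 : (0:ℝ) < x := hx
      simp only [Function.comp]
      rw [Real.inv_rpow hx0.le, ← Real.rpow_neg hx0.le, neg_sub]
    have h2 : ∀ᶠ x in nhdsWithin 0 (Ioi 0), x ^ (p - (n : ℝ) * q) ≤ x ^ p / f x ^ q := by
      have hev : ∀ᶠ x in nhdsWithin 0 (Ioi 0), f x / x ^ n < 1 :=
        (hvan n).eventually_lt_const (by norm_num)
      filter_upwards [self_mem_nhdsWithin, hev] with x hx hlt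
      have hx0 : (0:ℝ) < x := hx
      have hfx : 0 < f x := hfpos x hx0
      have hfxn : f x ≤ x ^ n := le_of_lt ((div_lt_one (pow_pos hx0 n)).1 hlt)
      have hfq : f x ^ q ≤ x ^ ((n : ℝ) * q) := by
        calc f x ^ q ≤ (x ^ n) ^ q := Real.rpow_le_rpow hfx.le hfxn hq.le
        _ = x ^ ((n : ℝ) * q) := by
            rw [← Real.rpow_natCast x n, ← Real.rpow_mul hx0.le]
      rw [Real.rpow_sub hx0]
      gcongr
    exact tendsto_atTop_mono' _ h2 h1
  -- finv tends to 0 within Ioi 0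
  have hinvt : Tendsto finv (nhdsWithin 0 (Ioi 0)) (nhdsWithin 0 (Ioi 0)) := by
    rw [tendsto_nhdsWithin_iff]
    constructor
    · rw [tendsto_order]
      constructor
      · intro a ha
        filter_upwards [self_mem_nhdsWithin] with t ht
        exact lt_of_lt_of_le ha (hfinv' t (le_of_lt ht)).1
      · intro a ha
        have hfa : 0 < f a := hfpos a ha
        have hmem : Ioo (0:ℝ) (f a) ∈ nhdsWithin (0:ℝ) (Ioi 0) :=
          Ioo_mem_nhdsGT_of_mem (by constructor <;> [exact le_refl 0; exact hfa])
        filter_upwards [hmem] with t ht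
        obtain ⟨hinv0, hinvf⟩ := hfinv' t ht.1.le
        rw [← hf.lt_iff_lt hinv0 ha.le, hinvf]
        exact ht.2
    · filter_upwards [self_mem_nhdsWithin] with t ht
      obtain ⟨hinv0, hinvf⟩ := hfinv' t (le_of_lt (show (0:ℝ) < t from ht))
      show 0 < finv t
      rw [← hf.lt_iff_lt self_mem_Ici hinv0, hf0, hinvf]
      exact ht
  refine (key.comp hinvt).congr' ?_
  filter_upwards [self_mem_nhdsWithin] with t ht
  obtain ⟨hinv0, hinvf⟩ := hfinv' t (le_of_lt (show (0:ℝ) < t from ht))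
  simp only [Function.comp, hinvf]
end

section
/- Let f: [0,∞) → ℝ be strictly increasing with f(0) = 0 such that Λ_f|_{[0,R]} satisfies a doubling condition for some R ∈ (0, f⁻¹(1)), with doubling constant σ and associated constants C', T from the differences-of-powers lemma. Then there exists ρ ∈ (0, 1/2] such that f⁻¹(t) − f⁻¹(t/2) ≤ C' · f⁻¹(t/2) for all t ∈ (0, ρ). -/
open Set

open Real

/-! With `L = log (1/t)` one has `f⁻¹(t) = G (1/L) = G (2s)` for `s = 1/(2L)`, while
`f⁻¹(t/2) = G (1/(log 2 + L))` is at least `G s` as soon as `t ≤ 1/2`. Choosing `t` so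
small that `s ≤ T`, the gap `G (2s) - f⁻¹(t/2)` is at most `G (2s) - G s ≤ C' G s ≤ C' f⁻¹(t/2)`. -/

lemma log_one_div_half {t : ℝ} (ht : 0 < t) : log (1 / (t / 2)) = log 2 + log (1 / t) := by
  rw [show 1 / (t / 2) = 2 * (1 / t) by field_simp, log_mul two_ne_zero (by positivity)]

lemma log_two_le_log_one_div {t : ℝ} (ht : 0 < t) (ht_half : t ≤ 1 / 2) :
    log 2 ≤ log (1 / t) :=
  log_le_log two_pos (by rw [le_div_iff₀ ht]; linarith)

lemma one_div_two_mul_log_le_of_lt_exp {t T : ℝ} (hT : 0 < T) (ht : 0 < t)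
    (ht_exp : t < exp (-(1 / (2 * T)))) : 1 / (2 * log (1 / t)) ≤ T := by
  have hL : 1 / (2 * T) < log (1 / t) := by
    have := log_lt_log ht ht_exp
    rw [log_exp] at this
    rw [one_div t, log_inv]
    linarith
  have hL0 : 0 < log (1 / t) := lt_trans (by positivity) hL
  rw [div_le_iff₀ (by positivity)]
  rw [div_lt_iff₀ (by positivity)] at hL
  linarith

theorem finv_comparison_general (finv G : ℝ → ℝ) (C' T : ℝ)
    (hC' : 0 < C') (hT : 0 < T)
    (hCT : ∀ s ∈ Icc (0:ℝ) T, G (2 * s) - G s ≤ C' * G s)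
    (hGmono : MonotoneOn G (Ici 0))
    (hfinvG : ∀ t ∈ Ioo (0:ℝ) 1, finv t = G (1 / Real.log (1 / t))) :
    ∃ ρ : ℝ, 0 < ρ ∧ ρ ≤ 1 / 2 ∧
      ∀ t ∈ Ioo (0:ℝ) ρ, finv t - finv (t / 2) ≤ C' * finv (t / 2) := by
  refine ⟨min (1 / 2) (exp (-(1 / (2 * T)))), by positivity, min_le_left _ _, ?_⟩
  rintro t ⟨ht0, htρ⟩
  obtain ⟨ht_half, ht_exp⟩ := lt_min_iff.mp htρ
  set L := log (1 / t)
  have hL2 : log 2 ≤ L := log_two_le_log_one_div ht0 ht_half.le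
  have hL0 : 0 < L := (log_pos one_lt_two).trans_le hL2
  set s := 1 / (2 * L)
  have hs0 : 0 < s := by positivity
  have hsT : s ≤ T := one_div_two_mul_log_le_of_lt_exp hT ht0 ht_exp
  have hfinv_t : finv t = G (2 * s) := by
    rw [hfinvG t ⟨ht0, by linarith⟩]
    congr 1
    change 1 / L = 2 * (1 / (2 * L))
    field_simp
  have hfinv_half : finv (t / 2) = G (1 / (log 2 + L)) := by
    rw [hfinvG (t / 2) ⟨by positivity, by linarith⟩, log_one_div_half ht0]
  have hs_le : G s ≤ finv (t / 2) := by
    rw [hfinv_half]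
    refine hGmono hs0.le (mem_Ici.2 (by positivity)) ?_
    change 1 / (2 * L) ≤ _
    gcongr
    linarith
  calc finv t - finv (t / 2) ≤ G (2 * s) - G s := by rw [hfinv_t]; linarith
    _ ≤ C' * G s := hCT s ⟨hs0.le, hsT⟩
    _ ≤ C' * finv (t / 2) := by gcongr

/-- If `Λ_f` satisfies a doubling condition on `[0,R]` with constant `σ`, with
associated constants `C', T` from the differences-of-powers lemma (i.e.
`G_f(2s) − G_f(s) ≤ C' G_f(s)` for `s ∈ [0,T]`, where `G_f = Λ_f⁻¹` and
`f⁻¹(t) = G_f(1/log(1/t))`), then there is a `ρ ∈ (0, 1/2]` such that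
`f⁻¹(t) − f⁻¹(t/2) ≤ C' · f⁻¹(t/2)` for all `t ∈ (0, ρ)`. -/
theorem finv_comparison (f finv G : ℝ → ℝ) (R σ C' T : ℝ)
    (hf : StrictMonoOn f (Ici 0)) (hf0 : f 0 = 0)
    (hR : 0 < R) (hR1 : f R < 1) (hσ : 1 < σ)
    (hdoub : ∀ x ∈ Icc (0:ℝ) (R / σ), 2 * Lam f x ≤ Lam f (σ * x))
    (hC' : 0 < C') (hT : 0 < T)
    (hCT : ∀ s ∈ Icc (0:ℝ) T, G (2 * s) - G s ≤ C' * G s)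
    (hGmono : MonotoneOn G (Ici 0))
    (hfinvG : ∀ t ∈ Ioo (0:ℝ) 1, finv t = G (1 / Real.log (1 / t))) :
    ∃ ρ : ℝ, 0 < ρ ∧ ρ ≤ 1 / 2 ∧
      ∀ t ∈ Ioo (0:ℝ) ρ, finv t - finv (t / 2) ≤ C' * finv (t / 2) :=
  finv_comparison_general finv G C' T hC' hT hCT hGmono hfinvG
end

section
/- Let f: [0,∞) → ℝ be strictly increasing, vanishing to infinite order at 0, with Λ_f satisfying a doubling condition near 0. Fix α > 0 and N ∈ ℤ₊. Then there exist constants c ∈ (0,1) and r(α,N) > 0 such that for all z ∈ ℂ with |z| < α t^{1/N} and all t ∈ (0, r(α,N)): |z| + (c/2)·f⁻¹(t) < f⁻¹(t/2). -/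
open Set Filter

set_option maxHeartbeats 1000000

/-- For `f` strictly increasing, vanishing to infinite order at `0`, with `Λ_f`
satisfying a doubling condition near `0`, and given `α > 0` and `N ∈ ℤ₊`, there
are `c ∈ (0,1)` and `r(α,N) > 0` such that `|z| + (c/2) f⁻¹(t) < f⁻¹(t/2)`
whenever `|z| < α t^{1/N}` and `0 < t < r(α,N)`. -/
theorem bidisc_radius_inequality (f finv : ℝ → ℝ) (α : ℝ) (N : ℕ+)
    (hf : StrictMonoOn f (Ici 0)) (hf0 : f 0 = 0)
    (hvan : ∀ n : ℕ, Tendsto (fun x => f x / x ^ n) (nhdsWithin 0 (Ioi 0)) (nhds 0))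
    (hfinv : ∀ x ≥ (0:ℝ), finv (f x) = x)
    (hfinv' : ∀ t ≥ (0:ℝ), 0 ≤ finv t ∧ f (finv t) = t)
    (hdoub : ∃ σ > (1:ℝ), ∃ R > (0:ℝ), f R < 1 ∧
      ∀ x ∈ Icc (0:ℝ) (R / σ), 2 * Lam f x ≤ Lam f (σ * x))
    (hα : 0 < α) :
    ∃ c ∈ Ioo (0:ℝ) 1, ∃ r > (0:ℝ), ∀ t ∈ Ioo (0:ℝ) r, ∀ z : ℂ,
      ‖z‖ < α * t ^ (1 / (N : ℝ)) →
      ‖z‖ + (c / 2) * finv t < finv (t / 2) := by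
  obtain ⟨σ, hσ, R, hR, hfR, hd⟩ := hdoub
  have hσ0 : (0:ℝ) < σ := by linarith
  have hNpos : (0:ℝ) < (N:ℝ) := by exact_mod_cast N.pos
  have hNne : ((N:ℕ):ℝ) ≠ 0 := ne_of_gt hNpos
  set β : ℝ := 2 * α * σ with hβdef
  have hβ : 0 < β := by positivity
  have hv := hvan (2 * (N:ℕ))
  rw [Metric.tendsto_nhdsWithin_nhds] at hv
  obtain ⟨δ, hδ, hδ'⟩ := hv ((β ^ (2 * (N:ℕ)))⁻¹) (by positivity)
  have hfRσ : 0 < f (R / σ) := by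
    rw [← hf0]
    exact hf (mem_Ici.mpr le_rfl) (mem_Ici.mpr (by positivity)) (by positivity)
  refine ⟨1/σ, ⟨by positivity, (div_lt_one hσ0).mpr hσ⟩,
    min (min (2 * f (R/σ)) (1/2)) (min ((δ/β)^(N:ℕ)) 1), by positivity, ?_⟩
  rintro t ⟨ht0, htr⟩ z hz
  have ht1 : t < 2 * f (R/σ) := lt_of_lt_of_le htr (le_trans (min_le_left _ _) (min_le_left _ _))
  have ht2 : t < 1/2 := lt_of_lt_of_le htr (le_trans (min_le_left _ _) (min_le_right _ _))
  have ht3 : t < (δ/β)^(N:ℕ) := lt_of_lt_of_le htr (le_trans (min_le_right _ _) (min_le_left _ _))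
  have ht4 : t < 1 := lt_of_lt_of_le htr (le_trans (min_le_right _ _) (min_le_right _ _))
  -- Sublemma A : f (β * t^(1/N)) < t
  have htp : 0 < t ^ (1/(N:ℝ)) := Real.rpow_pos_of_pos ht0 _
  set y : ℝ := β * t ^ (1/(N:ℝ)) with hydef
  have hy : 0 < y := by positivity
  have hyδ : y < δ := by
    have h1 : t ^ (1/(N:ℝ)) < ((δ/β)^(N:ℕ)) ^ (1/(N:ℝ)) :=
      Real.rpow_lt_rpow ht0.le ht3 (by positivity)
    have h2 : ((δ/β)^(N:ℕ)) ^ (1/(N:ℝ)) = δ/β := by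
      rw [← Real.rpow_natCast (δ/β) (N:ℕ), ← Real.rpow_mul (by positivity : (0:ℝ) ≤ δ/β),
        mul_one_div, div_self hNne, Real.rpow_one]
    have h3 : t ^ (1/(N:ℝ)) < δ/β := h2 ▸ h1
    calc y = β * t ^ (1/(N:ℝ)) := rfl
      _ < β * (δ/β) := by exact mul_lt_mul_of_pos_left h3 hβ
      _ = δ := by field_simp
  have hδy := hδ' (mem_Ioi.mpr hy) (by rw [Real.dist_eq, sub_zero, abs_of_pos hy]; exact hyδ)
  rw [Real.dist_eq, sub_zero] at hδy
  have hfy1 : f y / y ^ (2*(N:ℕ)) < (β ^ (2 * (N:ℕ)))⁻¹ := lt_of_abs_lt hδy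
  have hypow : y ^ (2*(N:ℕ)) = β^(2*(N:ℕ)) * t^2 := by
    rw [hydef, mul_pow]
    congr 1
    rw [← Real.rpow_natCast (t ^ (1/(N:ℝ))) (2*(N:ℕ)), ← Real.rpow_mul ht0.le,
      show (1/(N:ℝ)) * ((2*(N:ℕ) : ℕ):ℝ) = 2 by push_cast; field_simp]
    rw [show (2:ℝ) = ((2:ℕ):ℝ) by norm_num, Real.rpow_natCast]
  have hfyt : f y < t := by
    have h4 : f y < (β ^ (2 * (N:ℕ)))⁻¹ * y ^ (2*(N:ℕ)) :=
      (div_lt_iff₀ (by positivity)).mp hfy1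
    rw [hypow, ← mul_assoc, inv_mul_cancel₀ (by positivity), one_mul] at h4
    nlinarith
  -- Sublemma B : finv t ≤ σ * finv (t/2)
  obtain ⟨hx0, hfx⟩ := hfinv' (t/2) (by positivity)
  set x : ℝ := finv (t/2) with hxdef
  have hxpos : 0 < x := by
    rcases lt_or_eq_of_le hx0 with h | h
    · exact h
    · exfalso; rw [← h, hf0] at hfx; linarith
  have hxle : x ≤ R/σ := by
    have h1 : f x < f (R/σ) := by rw [hfx]; linarith
    exact le_of_lt ((hf.lt_iff_lt (mem_Ici.mpr hx0) (mem_Ici.mpr (by positivity))).mp h1)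
  have hσx : σ * x ≤ R := by
    have := (le_div_iff₀ hσ0).mp hxle; linarith
  have hfσx_pos : 0 < f (σ * x) := by
    rw [← hf0]
    exact hf (mem_Ici.mpr le_rfl) (mem_Ici.mpr (by positivity)) (by positivity)
  have hfσx_lt1 : f (σ * x) < 1 :=
    lt_of_le_of_lt ((hf.le_iff_le (mem_Ici.mpr (by positivity)) (mem_Ici.mpr hR.le)).mpr hσx) hfR
  have hdx := hd x ⟨hx0, hxle⟩
  rw [Lam, Lam, hfx] at hdx
  have hlog1 : Real.log (t/2) < 0 := Real.log_neg (by positivity) (by linarith)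
  have hlog2 : Real.log (f (σ*x)) < 0 := Real.log_neg hfσx_pos hfσx_lt1
  have hA : 0 < -Real.log (t/2) := neg_pos.mpr hlog1
  have hB : 0 < -Real.log (f (σ*x)) := neg_pos.mpr hlog2
  have e1 : (2:ℝ) / (-Real.log (t/2)) = 2 * (-1/Real.log (t/2)) := by
    rw [div_neg, neg_div]; ring
  have e2 : (1:ℝ) / (-Real.log (f (σ*x))) = -1/Real.log (f (σ*x)) := by
    rw [div_neg, neg_div]
  have hdx' : 2 / (-Real.log (t/2)) ≤ 1 / (-Real.log (f (σ*x))) := by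
    rw [e1, e2]; exact hdx
  have hdx2 : 2 * (-Real.log (f (σ*x))) ≤ 1 * (-Real.log (t/2)) :=
    (div_le_div_iff₀ hA hB).mp hdx'
  have key : Real.log (t/2) * (2:ℝ)⁻¹ ≤ Real.log (f (σ*x)) := by linarith
  have h5 : (t/2) ^ ((2:ℝ)⁻¹) ≤ f (σ*x) := by
    have h5' := Real.exp_le_exp.mpr key
    rw [Real.exp_log hfσx_pos] at h5'
    rwa [Real.rpow_def_of_pos (by positivity)]
  have h6 : t ≤ (t/2) ^ ((2:ℝ)⁻¹) := by
    have h7 : t = (t^2) ^ ((2:ℝ)⁻¹) := by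
      rw [← Real.rpow_natCast t 2, ← Real.rpow_mul ht0.le]
      norm_num
    have h7' : t^2 ≤ t/2 := by nlinarith [ht0, ht2]
    calc t = (t^2) ^ ((2:ℝ)⁻¹) := h7
      _ ≤ (t/2) ^ ((2:ℝ)⁻¹) := Real.rpow_le_rpow (by positivity) h7' (by norm_num)
  obtain ⟨hft0, hftt⟩ := hfinv' t ht0.le
  have hB2 : finv t ≤ σ * x := by
    have h8 : f (finv t) ≤ f (σ*x) := by rw [hftt]; exact le_trans h6 h5
    exact (hf.le_iff_le (mem_Ici.mpr hft0) (mem_Ici.mpr (by positivity))).mp h8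
  -- Sublemma C : y < finv t
  have hC : y < finv t := by
    have h9 : f y < f (finv t) := by rw [hftt]; exact hfyt
    exact (hf.lt_iff_lt (mem_Ici.mpr hy.le) (mem_Ici.mpr hft0)).mp h9
  -- Final
  have hz2 : 2 * σ * ‖z‖ < y := by
    have := mul_lt_mul_of_pos_left hz (by positivity : (0:ℝ) < 2 * σ)
    calc 2 * σ * ‖z‖ < 2 * σ * (α * t ^ (1/(N:ℝ))) := this
      _ = y := by rw [hydef]; ring
  have h10 : σ * ‖z‖ + finv t / 2 < σ * x := by linarith
  have h11 : σ * (‖z‖ + (1/σ)/2 * finv t) = σ * ‖z‖ + finv t / 2 := by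
    field_simp
  have h12 : σ * (‖z‖ + (1/σ)/2 * finv t) < σ * x := by rw [h11]; exact h10
  exact lt_of_mul_lt_mul_left h12 hσ0.le
end

section
/- Let f: [0,∞) → ℝ be strictly increasing, C^∞, vanishing to infinite order at 0, with Λ_f|_{[0,R]} satisfying a doubling condition for some R ∈ (0, f⁻¹(1)). Let a := min{f⁻¹(1), 1} and n ∈ {0,1}. Then there exist constants B, r₀ > 0 such that for all t ∈ (0, r₀): ∫_0^a r^{2n+1}/(t + f(r))² dr ≤ B · t^{-2} · (f⁻¹(t))^{2n+2}. -/
open Set Filter MeasureTheory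

/-- The key integral estimate: for `f` smooth, strictly increasing, vanishing to
infinite order at `0`, with `Λ_f` doubling on `[0,R]`, `a = min{f⁻¹(1),1}` and
`n ∈ {0,1}`, there are `B, r₀ > 0` such that
`∫_0^a r^{2n+1}/(t+f(r))² dr ≤ B t⁻² (f⁻¹(t))^{2n+2}` for `t ∈ (0,r₀)`. -/
theorem key_integral_estimate (f finv : ℝ → ℝ) (R σ : ℝ) (n : ℕ)
    (hf : StrictMonoOn f (Ici 0)) (hf0 : f 0 = 0)
    (hsm : ContDiffOn ℝ (⊤ : ℕ∞) f (Ici 0))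
    (hvan : ∀ m : ℕ, Tendsto (fun x => f x / x ^ m) (nhdsWithin 0 (Ioi 0)) (nhds 0))
    (hR : 0 < R) (hR1 : f R < 1) (hσ : 1 < σ)
    (hdoub : ∀ x ∈ Icc (0:ℝ) (R / σ), 2 * Lam f x ≤ Lam f (σ * x))
    (hfinv : ∀ x ≥ (0:ℝ), finv (f x) = x)
    (hfinv' : ∀ t ≥ (0:ℝ), 0 ≤ finv t ∧ f (finv t) = t)
    (hn : n = 0 ∨ n = 1) :
    ∃ B > (0:ℝ), ∃ r₀ > (0:ℝ), ∀ t ∈ Ioo (0:ℝ) r₀,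
      (∫ r in (0:ℝ)..(min (finv 1) 1), r ^ (2 * n + 1) / (t + f r) ^ 2)
        ≤ B * t ^ (-(2:ℤ)) * finv t ^ (2 * n + 2) := by
  have hσ0 : (0:ℝ) < σ := lt_trans one_pos hσ
  set a : ℝ := min (finv 1) 1 with ha_def
  have hfinv1 := hfinv' 1 zero_le_one
  have hfinv1_pos : 0 < finv 1 := by
    rcases hfinv1.1.lt_or_eq with h | h
    · exact h
    · exfalso; rw [← h] at hfinv1; rw [hf0] at hfinv1; exact one_ne_zero hfinv1.2.symm
  have ha_pos : 0 < a := lt_min hfinv1_pos one_pos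
  -- infinite order vanishing : get δ with f x ≤ x^(2n+2) on (0,δ)
  obtain ⟨δ, hδpos, hδ⟩ : ∃ δ > 0, ∀ x, 0 < x → x < δ → f x ≤ x ^ (2 * n + 2) := by
    have h := (hvan (2 * n + 2)).eventually (eventually_lt_nhds one_pos)
    rw [eventually_nhdsWithin_iff, Metric.eventually_nhds_iff] at h
    obtain ⟨ε, hε, h⟩ := h
    refine ⟨ε, hε, fun x hx hxε => ?_⟩
    have hd : dist x 0 < ε := by
      rw [Real.dist_eq, sub_zero, abs_of_pos hx]; exact hxε
    have := h hd hx
    exact le_of_lt ((div_lt_one (pow_pos hx _)).mp this)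
  have hfRσ_pos : 0 < f (R / σ) := by
    have := hf (self_mem_Ici : (0:ℝ) ∈ Ici 0) (le_of_lt (div_pos hR hσ0) : R / σ ∈ Ici 0)
      (div_pos hR hσ0)
    rwa [hf0] at this
  have hfδ_pos : 0 < f (δ / 2) := by
    have := hf (self_mem_Ici : (0:ℝ) ∈ Ici 0) (le_of_lt (half_pos hδpos) : δ / 2 ∈ Ici 0)
      (half_pos hδpos)
    rwa [hf0] at this
  refine ⟨σ ^ (2 * n + 2) + a ^ (2 * n + 2),
    by positivity,
    min 1 (min (f (R / σ)) (f (δ / 2))), by positivity, fun t ht => ?_⟩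
  obtain ⟨ht0, htr⟩ := ht
  have ht1 : t < 1 := lt_of_lt_of_le htr (min_le_left _ _)
  have htR : t < f (R / σ) := lt_of_lt_of_le htr (le_trans (min_le_right _ _) (min_le_left _ _))
  have htδ : t < f (δ / 2) := lt_of_lt_of_le htr (le_trans (min_le_right _ _) (min_le_right _ _))
  have hfinvt := hfinv' t ht0.le
  have hfinvt_pos : 0 < finv t := by
    rcases hfinvt.1.lt_or_eq with h | h
    · exact h
    · exfalso; rw [← h] at hfinvt; rw [hf0] at hfinvt; exact (ne_of_gt ht0) hfinvt.2.symm
  have hst_pos : 0 < Real.sqrt t := Real.sqrt_pos.mpr ht0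
  have hfinvs := hfinv' (Real.sqrt t) (Real.sqrt_nonneg t)
  -- finv t < R/σ
  have hfinvt_lt : finv t < R / σ := by
    by_contra h
    push_neg at h
    have := hf.le_iff_le (le_of_lt (div_pos hR hσ0) : R / σ ∈ Ici 0) hfinvt.1 |>.mpr h
    rw [hfinvt.2] at this
    exact absurd htR (not_lt.mpr this)
  -- finv t < δ/2 hence t ≤ (finv t)^(2n+2)
  have htpow : t ≤ finv t ^ (2 * n + 2) := by
    have hlt : finv t < δ / 2 := by
      by_contra h
      push_neg at h
      have := hf.le_iff_le (le_of_lt (half_pos hδpos) : δ / 2 ∈ Ici 0) hfinvt.1 |>.mpr h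
      rw [hfinvt.2] at this
      exact absurd htδ (not_lt.mpr this)
    have := hδ (finv t) hfinvt_pos (lt_trans hlt (by linarith))
    rwa [hfinvt.2] at this
  -- the doubling step : finv (√t) ≤ σ * finv t
  have hkey : finv (Real.sqrt t) ≤ σ * finv t := by
    have hmem : finv t ∈ Icc (0:ℝ) (R / σ) := ⟨hfinvt.1, hfinvt_lt.le⟩
    have hd := hdoub (finv t) hmem
    have hlogt : Real.log t < 0 := Real.log_neg ht0 ht1
    have hLam_t : Lam f (finv t) = -1 / Real.log t := by rw [Lam, hfinvt.2]
    have hσx_pos : 0 < σ * finv t := mul_pos hσ0 hfinvt_pos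
    have hu_gt : t < f (σ * finv t) := by
      have hlt : finv t < σ * finv t := by nlinarith
      have := hf hfinvt.1 hσx_pos.le hlt
      rwa [hfinvt.2] at this
    have hu_pos : 0 < f (σ * finv t) := lt_trans ht0 hu_gt
    have hL1 : Real.log (Real.sqrt t) < 0 := by
      rw [Real.log_sqrt ht0.le]; linarith
    have hLHS : 2 * Lam f (finv t) = -1 / Real.log (Real.sqrt t) := by
      rw [hLam_t, Real.log_sqrt ht0.le]
      field_simp
    rw [hLHS, Lam] at hd
    -- hd : -1 / log √t ≤ -1 / log (f (σ * finv t))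
    have hL2 : Real.log (f (σ * finv t)) < 0 := by
      by_contra h
      push_neg at h
      have h1 : -1 / Real.log (f (σ * finv t)) ≤ 0 :=
        div_nonpos_iff.mpr (Or.inr ⟨by norm_num, h⟩)
      have h2 : 0 < -1 / Real.log (Real.sqrt t) := by
        rw [neg_div]
        have : 1 / Real.log (Real.sqrt t) < 0 := div_neg_of_pos_of_neg one_pos hL1
        linarith
      linarith
    have h1d : 1 / Real.log (f (σ * finv t)) ≤ 1 / Real.log (Real.sqrt t) := by
      have := hd
      rw [neg_div, neg_div] at this
      linarith
    have hlog_le : Real.log (Real.sqrt t) ≤ Real.log (f (σ * finv t)) :=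
      (one_div_le_one_div_of_neg hL2 hL1).mp h1d
    have hsu : Real.sqrt t ≤ f (σ * finv t) := by
      have := Real.exp_le_exp.mpr hlog_le
      rwa [Real.exp_log hst_pos, Real.exp_log hu_pos] at this
    by_contra h
    push_neg at h
    have := hf hσx_pos.le hfinvs.1 h
    rw [hfinvs.2] at this
    exact absurd hsu (not_le.mpr this)
  -- set up the integral
  set c : ℝ := min (finv (Real.sqrt t)) a with hc_def
  have hc_nonneg : 0 ≤ c := le_min hfinvs.1 ha_pos.le
  have hc_le_a : c ≤ a := min_le_right _ _
  have hfx_nonneg : ∀ x ∈ Icc (0:ℝ) a, 0 ≤ f x := by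
    intro x hx
    have := hf.monotoneOn (self_mem_Ici : (0:ℝ) ∈ Ici 0) hx.1 hx.1
    rwa [hf0] at this
  set g : ℝ → ℝ := fun r => r ^ (2 * n + 1) / (t + f r) ^ 2 with hg_def
  have hcont : ContinuousOn g (Icc 0 a) := by
    apply ContinuousOn.div
    · exact (continuous_pow _).continuousOn
    · exact (continuousOn_const.add ((hsm.continuousOn).mono
        (fun x hx => hx.1))).pow 2
    · intro x hx
      have := hfx_nonneg x hx
      positivity
  have hint1 : IntervalIntegrable g volume 0 c := by
    apply ContinuousOn.intervalIntegrable
    rw [uIcc_of_le hc_nonneg]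
    exact hcont.mono (Icc_subset_Icc le_rfl hc_le_a)
  have hint2 : IntervalIntegrable g volume c a := by
    apply ContinuousOn.intervalIntegrable
    rw [uIcc_of_le hc_le_a]
    exact hcont.mono (Icc_subset_Icc hc_nonneg le_rfl)
  have hsplit : (∫ r in (0:ℝ)..c, g r) + (∫ r in c..a, g r) = ∫ r in (0:ℝ)..a, g r :=
    intervalIntegral.integral_add_adjacent_intervals hint1 hint2
  have ht2pos : (0:ℝ) < t ^ 2 := by positivity
  -- piece 1
  have hb1 : (∫ r in (0:ℝ)..c, g r) ≤ finv (Real.sqrt t) ^ (2 * n + 2) / t ^ 2 := by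
    have hC : ∀ x ∈ Set.uIoc (0:ℝ) c, ‖g x‖ ≤ finv (Real.sqrt t) ^ (2 * n + 1) / t ^ 2 := by
      intro x hx
      rw [uIoc_of_le hc_nonneg] at hx
      have hx0 : 0 < x := hx.1
      have hxc : x ≤ c := hx.2
      have hfx : 0 ≤ f x := hfx_nonneg x ⟨hx0.le, le_trans hxc hc_le_a⟩
      have hnum : x ^ (2 * n + 1) ≤ finv (Real.sqrt t) ^ (2 * n + 1) :=
        pow_le_pow_left₀ hx0.le (le_trans hxc (min_le_left _ _)) _
      have hden : t ^ 2 ≤ (t + f x) ^ 2 :=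
        pow_le_pow_left₀ ht0.le (by linarith) _
      rw [Real.norm_eq_abs, abs_of_nonneg (by positivity)]
      exact div_le_div₀ (pow_nonneg hfinvs.1 _) hnum ht2pos hden
    have := intervalIntegral.norm_integral_le_of_norm_le_const hC
    have h1 : (∫ r in (0:ℝ)..c, g r) ≤ finv (Real.sqrt t) ^ (2 * n + 1) / t ^ 2 * |c - 0| :=
      le_trans (le_abs_self _) (by rwa [Real.norm_eq_abs] at this)
    have h2 : |c - 0| = c := by rw [sub_zero, abs_of_nonneg hc_nonneg]
    rw [h2] at h1
    have h3 : finv (Real.sqrt t) ^ (2 * n + 1) / t ^ 2 * c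
        ≤ finv (Real.sqrt t) ^ (2 * n + 1) / t ^ 2 * finv (Real.sqrt t) :=
      mul_le_mul_of_nonneg_left (min_le_left _ _) (div_nonneg (pow_nonneg hfinvs.1 _) ht2pos.le)
    have h4 : finv (Real.sqrt t) ^ (2 * n + 1) / t ^ 2 * finv (Real.sqrt t)
        = finv (Real.sqrt t) ^ (2 * n + 2) / t ^ 2 := by
      rw [div_mul_eq_mul_div, ← pow_succ]
    linarith
  -- piece 2
  have hb2 : (∫ r in c..a, g r) ≤ a ^ (2 * n + 2) / t := by
    rcases le_or_gt (finv (Real.sqrt t)) a with hca | hca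
    · have hc_eq : c = finv (Real.sqrt t) := min_eq_left hca
      have hC : ∀ x ∈ Set.uIoc c a, ‖g x‖ ≤ a ^ (2 * n + 1) / t := by
        intro x hx
        rw [uIoc_of_le hc_le_a] at hx
        have hx0 : 0 < x := lt_of_le_of_lt hc_nonneg hx.1
        have hfx_ge : Real.sqrt t ≤ f x := by
          have := hf.monotoneOn (show c ∈ Ici (0:ℝ) from hc_nonneg)
            (show x ∈ Ici (0:ℝ) from hx0.le) hx.1.le
          rw [hc_eq, hfinvs.2] at this
          exact this
        have hfx : 0 ≤ f x := le_trans hst_pos.le hfx_ge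
        have hden : t ≤ (t + f x) ^ 2 := by
          have h1 : Real.sqrt t ≤ t + f x := by linarith
          have h2 : Real.sqrt t ^ 2 ≤ (t + f x) ^ 2 :=
            pow_le_pow_left₀ (Real.sqrt_nonneg t) h1 2
          rwa [Real.sq_sqrt ht0.le] at h2
        have hnum : x ^ (2 * n + 1) ≤ a ^ (2 * n + 1) :=
          pow_le_pow_left₀ hx0.le hx.2 _
        rw [Real.norm_eq_abs, abs_of_nonneg (by positivity)]
        exact div_le_div₀ (by positivity) hnum ht0 hden
      have := intervalIntegral.norm_integral_le_of_norm_le_const hC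
      have h1 : (∫ r in c..a, g r) ≤ a ^ (2 * n + 1) / t * |a - c| :=
        le_trans (le_abs_self _) (by rwa [Real.norm_eq_abs] at this)
      have h2 : |a - c| ≤ a := by
        rw [abs_of_nonneg (by linarith)]; linarith
      have h3 : a ^ (2 * n + 1) / t * |a - c| ≤ a ^ (2 * n + 1) / t * a :=
        mul_le_mul_of_nonneg_left h2 (by positivity)
      have h4 : a ^ (2 * n + 1) / t * a = a ^ (2 * n + 2) / t := by
        rw [div_mul_eq_mul_div, ← pow_succ]
      linarith
    · have hc_eq : c = a := min_eq_right hca.le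
      rw [hc_eq, intervalIntegral.integral_same]
      positivity
  -- combine
  have hz : t ^ (-(2:ℤ)) = (t ^ 2)⁻¹ := by
    rw [zpow_neg]
    norm_cast
  have hpow_key : finv (Real.sqrt t) ^ (2 * n + 2) ≤ σ ^ (2 * n + 2) * finv t ^ (2 * n + 2) := by
    have := pow_le_pow_left₀ hfinvs.1 hkey (2 * n + 2)
    rwa [mul_pow] at this
  calc (∫ r in (0:ℝ)..a, g r)
      = (∫ r in (0:ℝ)..c, g r) + (∫ r in c..a, g r) := hsplit.symm
    _ ≤ finv (Real.sqrt t) ^ (2 * n + 2) / t ^ 2 + a ^ (2 * n + 2) / t := add_le_add hb1 hb2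
    _ ≤ (σ ^ (2 * n + 2) + a ^ (2 * n + 2)) * t ^ (-(2:ℤ)) * finv t ^ (2 * n + 2) := by
        rw [hz]
        have hA : finv (Real.sqrt t) ^ (2 * n + 2) / t ^ 2
            ≤ σ ^ (2 * n + 2) * finv t ^ (2 * n + 2) / t ^ 2 :=
          (div_le_div_iff_of_pos_right ht2pos).mpr hpow_key
        have hB : a ^ (2 * n + 2) / t ≤ a ^ (2 * n + 2) * finv t ^ (2 * n + 2) / t ^ 2 := by
          rw [div_le_div_iff₀ ht0 ht2pos]
          have hane : (0:ℝ) ≤ a ^ (2 * n + 2) := by positivity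
          nlinarith [mul_le_mul_of_nonneg_left htpow hane]
        have heq : (σ ^ (2 * n + 2) + a ^ (2 * n + 2)) * (t ^ 2)⁻¹ * finv t ^ (2 * n + 2)
            = σ ^ (2 * n + 2) * finv t ^ (2 * n + 2) / t ^ 2
              + a ^ (2 * n + 2) * finv t ^ (2 * n + 2) / t ^ 2 := by
          field_simp
        rw [heq]
        exact add_le_add hA hB
end
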